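/- The three triassociative algebras Trias₂²⁵ (x⊢x = x, x⊣x = x, y⊣x = y, x⊥x = x, y⊥x = y), Trias₂²⁶ (x⊢x = x, x⊣x = x, y⊣x = y, x⊥x = x), and Trias₂²⁷ with α = 0 (x⊢x = x, x⊣x = x, x⊥x = x) are pairwise non-isomorphic. -/
import Mathlib


/-- A triassociative algebra structure on a complex vector space `T`:
three bilinear operations `l` (⊢), `r` (⊣), `m` (⊥) satisfying the
11 Loday–Ronco identities. -/
structure Trias (T : Type*) [AddCommGroup T] [Module ℂ T] where
  l : T →ₗ[ℂ] T →ₗ[ℂ] T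
  r : T →ₗ[ℂ] T →ₗ[ℂ] T
  m : T →ₗ[ℂ] T →ₗ[ℂ] T
  A1 : ∀ x y z, l (l x y) z = l x (l y z)
  A2 : ∀ x y z, r (r x y) z = r x (r y z)
  D1 : ∀ x y z, l (r x y) z = l x (l y z)
  D2 : ∀ x y z, r (r x y) z = r x (l y z)
  S1 : ∀ x y z, r (l x y) z = l x (r y z)
  T1 : ∀ x y z, l (m x y) z = l x (l y z)
  T2 : ∀ x y z, r (r x y) z = r x (m y z)
  T3 : ∀ x y z, m (l x y) z = l x (m y z)
  T4 : ∀ x y z, r (m x y) z = m x (r y z)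
  S2 : ∀ x y z, m (r x y) z = m x (l y z)
  A3 : ∀ x y z, m (m x y) z = m x (m y z)

/-- Isomorphism of triassociative algebras: a linear bijection preserving
all three operations. -/
def TriasIso {T S : Type*} [AddCommGroup T] [Module ℂ T] [AddCommGroup S]
    [Module ℂ S] (A : Trias T) (B : Trias S) : Prop :=
  ∃ e : T ≃ₗ[ℂ] S,
    (∀ a b, e (A.l a b) = B.l (e a) (e b)) ∧
    (∀ a b, e (A.r a b) = B.r (e a) (e b)) ∧
    (∀ a b, e (A.m a b) = B.m (e a) (e b))

/-- The bilinear operation on `ℂ²` with `x∗x = x` and all other basis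
products zero (`x = (1,0)`, `y = (0,1)`). -/
noncomputable def opL : (ℂ × ℂ) →ₗ[ℂ] (ℂ × ℂ) →ₗ[ℂ] (ℂ × ℂ) :=
  LinearMap.mk₂ ℂ (fun p q => (p.1 * q.1, 0))
    (by intros; simp [Prod.ext_iff, add_mul])
    (by intros; simp [Prod.ext_iff, smul_eq_mul, mul_assoc])
    (by intros; simp [Prod.ext_iff, mul_add])
    (by intros; simp [Prod.ext_iff, smul_eq_mul]; ring)

/-- The bilinear operation on `ℂ²` with `x∗x = x`, `y∗x = y` and all other
basis products zero. -/
noncomputable def opR : (ℂ × ℂ) →ₗ[ℂ] (ℂ × ℂ) →ₗ[ℂ] (ℂ × ℂ) :=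
  LinearMap.mk₂ ℂ (fun p q => (p.1 * q.1, p.2 * q.1))
    (by intros; simp [Prod.ext_iff, add_mul])
    (by intros; simp [Prod.ext_iff, smul_eq_mul, mul_assoc])
    (by intros; simp [Prod.ext_iff, mul_add])
    (by intros; simp [Prod.ext_iff, smul_eq_mul]; constructor <;> ring)

/-- `Trias₂²⁵` : `x⊢x = x`, `x⊣x = x`, `y⊣x = y`, `x⊥x = x`, `y⊥x = y`. -/
noncomputable def trias25 : Trias (ℂ × ℂ) where
  l := opL
  r := opR
  m := opR
  A1 := by intros; simp [opL, Prod.ext_iff, mul_assoc]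
  A2 := by intros; simp [opR, Prod.ext_iff, mul_assoc]
  D1 := by intros; simp [opL, opR, Prod.ext_iff, mul_assoc]
  D2 := by intros; simp [opL, opR, Prod.ext_iff, mul_assoc]
  S1 := by intros; simp [opL, opR, Prod.ext_iff, mul_assoc]
  T1 := by intros; simp [opL, opR, Prod.ext_iff, mul_assoc]
  T2 := by intros; simp [opL, opR, Prod.ext_iff, mul_assoc]
  T3 := by intros; simp [opL, opR, Prod.ext_iff, mul_assoc]
  T4 := by intros; simp [opL, opR, Prod.ext_iff, mul_assoc]
  S2 := by intros; simp [opL, opR, Prod.ext_iff, mul_assoc]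
  A3 := by intros; simp [opR, Prod.ext_iff, mul_assoc]

/-- `Trias₂²⁶` : `x⊢x = x`, `x⊣x = x`, `y⊣x = y`, `x⊥x = x`. -/
noncomputable def trias26 : Trias (ℂ × ℂ) where
  l := opL
  r := opR
  m := opL
  A1 := by intros; simp [opL, Prod.ext_iff, mul_assoc]
  A2 := by intros; simp [opR, Prod.ext_iff, mul_assoc]
  D1 := by intros; simp [opL, opR, Prod.ext_iff, mul_assoc]
  D2 := by intros; simp [opL, opR, Prod.ext_iff, mul_assoc]
  S1 := by intros; simp [opL, opR, Prod.ext_iff, mul_assoc]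
  T1 := by intros; simp [opL, opR, Prod.ext_iff, mul_assoc]
  T2 := by intros; simp [opL, opR, Prod.ext_iff, mul_assoc]
  T3 := by intros; simp [opL, opR, Prod.ext_iff, mul_assoc]
  T4 := by intros; simp [opL, opR, Prod.ext_iff, mul_assoc]
  S2 := by intros; simp [opL, opR, Prod.ext_iff, mul_assoc]
  A3 := by intros; simp [opL, Prod.ext_iff, mul_assoc]

/-- `Trias₂²⁷` with `α = 0` : `x⊢x = x`, `x⊣x = x`, `x⊥x = x`. -/
noncomputable def trias27zero : Trias (ℂ × ℂ) where
  l := opL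
  r := opL
  m := opL
  A1 := by intros; simp [opL, Prod.ext_iff, mul_assoc]
  A2 := by intros; simp [opL, Prod.ext_iff, mul_assoc]
  D1 := by intros; simp [opL, Prod.ext_iff, mul_assoc]
  D2 := by intros; simp [opL, Prod.ext_iff, mul_assoc]
  S1 := by intros; simp [opL, Prod.ext_iff, mul_assoc]
  T1 := by intros; simp [opL, Prod.ext_iff, mul_assoc]
  T2 := by intros; simp [opL, Prod.ext_iff, mul_assoc]
  T3 := by intros; simp [opL, Prod.ext_iff, mul_assoc]
  T4 := by intros; simp [opL, Prod.ext_iff, mul_assoc]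
  S2 := by intros; simp [opL, Prod.ext_iff, mul_assoc]
  A3 := by intros; simp [opL, Prod.ext_iff, mul_assoc]

lemma no_opR_opL (e : (ℂ × ℂ) ≃ₗ[ℂ] (ℂ × ℂ))
    (h : ∀ a b, e (opR a b) = opL (e a) (e b)) : False := by
  have h1 := h (1, 0) (1, 0)
  have h2 := h (0, 1) (1, 0)
  simp only [opR, opL, LinearMap.mk₂_apply, one_mul, mul_one, zero_mul, mul_zero] at h1 h2
  -- h1 : e (1,0) = ((e (1,0)).1 * (e (1,0)).1, 0)
  -- h2 : e (0,1) = ((e (0,1)).1 * (e (1,0)).1, 0)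
  set a := e (1, 0) with ha
  set b := e (0, 1) with hb
  have ha2 : a.2 = 0 := by rw [h1]
  have hb2 : b.2 = 0 := by rw [h2]
  have key : e (b.1 • (1, 0) - a.1 • (0, 1)) = 0 := by
    rw [map_sub, map_smul, map_smul, ← ha, ← hb]
    have : b.1 • a - a.1 • b = 0 := by
      apply Prod.ext <;> simp [ha2, hb2, smul_eq_mul, mul_comm]
    simpa using this
  obtain ⟨hb1, ha1⟩ : b.1 = 0 ∧ a.1 = 0 := by simpa using key
  have : ((1 : ℂ), (0 : ℂ)) = (0 : ℂ × ℂ) := by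
    apply e.injective
    rw [map_zero, ← ha]
    exact Prod.ext ha1 ha2
  simp [Prod.ext_iff] at this

/-- `Trias₂²⁵`, `Trias₂²⁶`, and `Trias₂²⁷` (with `α = 0`) are pairwise
non-isomorphic. -/
theorem stmt13 :
    ¬ TriasIso trias25 trias26 ∧ ¬ TriasIso trias25 trias27zero ∧
    ¬ TriasIso trias26 trias27zero := by
  refine ⟨?_, ?_, ?_⟩
  · rintro ⟨e, -, -, hm⟩; exact no_opR_opL e hm
  · rintro ⟨e, -, -, hm⟩; exact no_opR_opL e hm
  · rintro ⟨e, -, hr, -⟩; exact no_opR_opL e hr
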